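/- There exists a constant c > 0 such that for every integer N ≥ 6, N · F(⌊N/2⌋, ⌊N/3⌋) ≤ c · E(0, ⌊5N/6⌋). -/

import Mathlib

/-!
Write `P(k) = ∏_{r=1}^{k} 2 sin(rπ/N)`, so that `F(j,l) = P(l+j) / P(j-l-1)` and
`E(0,l) = P(l)²`. Reflecting `r ↦ N - r` in `P(N-1) = N` gives `N = P(m) P(N-1-m)`, so with
`m = ⌊5N/6⌋`, `a = ⌊N/3⌋ + ⌊N/2⌋` and `b = ⌊N/2⌋ - ⌊N/3⌋ - 1` the claim becomes
`P(N-1-m) P(a) ≤ c P(m) P(b)`. Going through `N mod 6` shows `a ∈ {m-1, m}` and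
`N-1-m ∈ {b, b+1}`; every factor `2 sin(rπ/N)` is at most `2`, and at least `1` when
`N/6 ≤ r ≤ 5N/6`, so `c = 2` works.
-/

/-- `E(j,l) = (∏_{r=1}^{l-j} 2 sin(rπ/N))·(∏_{r=1}^{l+j} 2 sin(rπ/N))`. -/
noncomputable def EE (N j l : ℕ) : ℝ :=
  (∏ r ∈ Finset.Icc 1 (l - j), 2 * Real.sin (r * Real.pi / N)) *
    ∏ r ∈ Finset.Icc 1 (l + j), 2 * Real.sin (r * Real.pi / N)

/-- `F(j,l) = (∏_{r=1}^{l+j} 2 sin(rπ/N)) / (∏_{r=1}^{j-l-1} 2 sin(rπ/N))`. -/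
noncomputable def FF (N j l : ℕ) : ℝ :=
  (∏ r ∈ Finset.Icc 1 (l + j), 2 * Real.sin (r * Real.pi / N)) /
    ∏ r ∈ Finset.Icc 1 (j - l - 1), 2 * Real.sin (r * Real.pi / N)

open Finset Real

theorem one_le_two_mul_sin {x : ℝ} (h₁ : π / 6 ≤ x) (h₂ : x ≤ 5 * π / 6) : 1 ≤ 2 * sin x := by
  suffices sin (π / 6) ≤ sin x by rw [sin_pi_div_six] at this; linarith
  rcases le_total x (π / 2) with hx | hx
  · exact sin_le_sin_of_le_of_le_pi_div_two (by linarith [pi_pos]) hx h₁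
  · rw [← sin_pi_sub x]
    exact sin_le_sin_of_le_of_le_pi_div_two (by linarith [pi_pos]) (by linarith) (by linarith)

theorem two_mul_sin_mul_pi_div_pos {r N : ℕ} (h₀ : 0 < r) (h : r < N) :
    0 < 2 * sin (r * π / N) := by
  have hN : (0 : ℝ) < N := by exact_mod_cast h₀.trans h
  refine mul_pos two_pos (sin_pos_of_pos_of_lt_pi (by positivity) ?_)
  rw [div_lt_iff₀ hN, mul_comm]
  exact mul_lt_mul_of_pos_left (by exact_mod_cast h) pi_pos

noncomputable def sinProd (N k : ℕ) : ℝ := ∏ r ∈ Icc 1 k, 2 * sin (r * π / N)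

section sinProd

variable {N k : ℕ}

theorem FF_eq_sinProd_div (N j l : ℕ) : FF N j l = sinProd N (l + j) / sinProd N (j - l - 1) :=
  rfl

theorem EE_zero_eq_sinProd_sq (N l : ℕ) : EE N 0 l = sinProd N l ^ 2 := by
  rw [sq]; rfl

theorem sinProd_eq_prod_range (N k : ℕ) :
    sinProd N k = ∏ r ∈ range k, 2 * sin ((1 + r : ℕ) * π / N) := by
  rw [sinProd, ← Ico_add_one_right_eq_Icc, prod_Ico_eq_prod_range, Nat.add_sub_cancel]

theorem sinProd_succ (N k : ℕ) :
    sinProd N (k + 1) = sinProd N k * (2 * sin ((k + 1 : ℕ) * π / N)) :=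
  prod_Icc_succ_top (Nat.le_add_left 1 k) _

theorem sinProd_pos (hk : k < N) : 0 < sinProd N k :=
  prod_pos fun _ hr => two_mul_sin_mul_pi_div_pos (mem_Icc.1 hr).1 ((mem_Icc.1 hr).2.trans_lt hk)

-- The factors are the norms `‖1 - ζ ^ r‖` for a primitive `(n + 1)`-th root of unity `ζ`.
theorem sinProd_add_one_self (n : ℕ) : sinProd (n + 1) n = (n + 1 : ℕ) := by
  have hζ := Complex.isPrimitiveRoot_exp (n + 1) n.succ_ne_zero
  have h := congrArg (‖·‖ : ℂ → ℝ) hζ.prod_one_sub_pow_eq_order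
  simp only [norm_prod, ← Nat.cast_succ, Complex.norm_natCast] at h
  rw [sinProd_eq_prod_range]
  refine (prod_congr rfl fun r hr => ?_).trans h
  have hr : 1 + r < n + 1 := by simp only [mem_range] at hr; omega
  have hpow : Complex.exp (2 * π * Complex.I / (n + 1 : ℕ)) ^ (r + 1) =
      Complex.exp (Complex.I * ((2 * ((1 + r : ℕ) * π / (n + 1 : ℕ)) : ℝ))) := by
    rw [← Complex.exp_nat_mul]; push_cast; ring_nf
  rw [hpow, norm_sub_rev, Complex.norm_exp_I_mul_ofReal_sub_one, mul_div_cancel_left₀ _ two_ne_zero,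
    norm_of_nonneg (two_mul_sin_mul_pi_div_pos (by omega) hr).le]

theorem sinProd_mul_sinProd_sub (hk : k < N) : sinProd N k * sinProd N (N - 1 - k) = N := by
  obtain ⟨n, rfl⟩ : ∃ n, N = n + 1 := ⟨N - 1, by omega⟩
  have hreflect : ∏ r ∈ range (n - k), 2 * sin ((1 + r : ℕ) * π / (n + 1 : ℕ)) =
      ∏ r ∈ range (n - k), 2 * sin ((1 + (k + r) : ℕ) * π / (n + 1 : ℕ)) := by
    rw [← prod_range_reflect]
    refine prod_congr rfl fun r hr => ?_
    have hr : r < n - k := mem_range.1 hr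
    rw [← sin_pi_sub]
    congr 2
    field_simp
    push_cast [Nat.cast_sub (by omega : r ≤ n - k - 1), Nat.cast_sub (by omega : 1 ≤ n - k),
      Nat.cast_sub (by omega : k ≤ n)]
    ring
  rw [add_tsub_cancel_right, ← sinProd_add_one_self, sinProd_eq_prod_range, sinProd_eq_prod_range,
    sinProd_eq_prod_range, hreflect, ← prod_range_mul_prod_Ico _ (by omega : k ≤ n),
    prod_Ico_eq_prod_range]

theorem sinProd_succ_le_two_mul (hk : k < N) : sinProd N (k + 1) ≤ 2 * sinProd N k := by
  rw [sinProd_succ, mul_comm 2]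
  have := sin_le_one ((k + 1 : ℕ) * π / N)
  nlinarith [sinProd_pos hk]

theorem sinProd_le_succ (h₁ : N ≤ 6 * (k + 1)) (h₂ : 6 * (k + 1) ≤ 5 * N) :
    sinProd N k ≤ sinProd N (k + 1) := by
  have hN : (0 : ℝ) < N := by exact_mod_cast (show 0 < N by omega)
  have h₁' : (N : ℝ) ≤ 6 * (k + 1 : ℕ) := by exact_mod_cast h₁
  have h₂' : 6 * ((k + 1 : ℕ) : ℝ) ≤ 5 * N := by exact_mod_cast h₂
  rw [sinProd_succ]
  refine le_mul_of_one_le_right (sinProd_pos (by omega)).le (one_le_two_mul_sin ?_ ?_)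
  · rw [le_div_iff₀ hN]; nlinarith [pi_pos]
  · rw [div_le_iff₀ hN]; nlinarith [pi_pos]

end sinProd

/-- Lemma 9 of the paper: `N · F(N/2, N/3) = E(0, 5N/6) · O(1)`. -/
theorem N_mul_F_le :
    ∃ c : ℝ, 0 < c ∧ ∀ N : ℕ, 6 ≤ N →
      (N : ℝ) * FF N (N / 2) (N / 3) ≤ c * EE N 0 (5 * N / 6) := by
  refine ⟨2, two_pos, fun N hN => ?_⟩
  set m := 5 * N / 6
  set b := N / 2 - N / 3 - 1
  have hPa : sinProd N (N / 3 + N / 2) ≤ sinProd N m := by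
    obtain h | h : N / 3 + N / 2 = m ∨ N / 3 + N / 2 + 1 = m := by omega
    · rw [h]
    · rw [← h]; exact sinProd_le_succ (by omega) (by omega)
  have hPb := sinProd_pos (N := N) (k := b) (by omega)
  have hPk : sinProd N (N - 1 - m) ≤ 2 * sinProd N b := by
    obtain h | h : N - 1 - m = b ∨ N - 1 - m = b + 1 := by omega
    · rw [h]; linarith
    · rw [h]; exact sinProd_succ_le_two_mul (by omega)
  have hPm := sinProd_pos (N := N) (k := m) (by omega)
  have hPa₀ := sinProd_pos (N := N) (k := N / 3 + N / 2) (by omega)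
  rw [FF_eq_sinProd_div, EE_zero_eq_sinProd_sq, ← sinProd_mul_sinProd_sub (k := m) (by omega),
    mul_div_assoc', div_le_iff₀ hPb]
  calc sinProd N m * sinProd N (N - 1 - m) * sinProd N (N / 3 + N / 2)
      ≤ sinProd N m * (2 * sinProd N b) * sinProd N m := by gcongr
    _ = 2 * sinProd N m ^ 2 * sinProd N b := by ring
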